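/- Let R be a Poisson superalgebra with universal enveloping algebra (U(R), m, h). Then the map m ⊗̂ h + h ⊗̂ m : R ⊗̂ R → U(R) ⊗̂ U(R), defined by (m⊗̂h + h⊗̂m)(a⊗b) = m(a)⊗h(b) + h(a)⊗m(b), is an even Lie superalgebra homomorphism, where R ⊗̂ R carries the Poisson bracket {a⊗a', b⊗b'} = (−1)^{|a'||b|}({a,b}⊗a'b' + ab⊗{a',b'}) and U(R) ⊗̂ U(R) carries the supercommutator bracket of the super tensor product algebra. -/

import Mathlib

namespace PaperSuper

universe uB

open scoped TensorProduct

section Core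

variable (k : Type*) [CommRing k]

/-- The Koszul sign `(-1)^{ij}` associated to parities `i j : ZMod 2`. -/
def sgn (i j : ZMod 2) : k := (-1 : k) ^ (i.val * j.val)

variable (A : Type*) [Ring A] [Algebra k A]

/-- A `ZMod 2`-graded algebra is supercommutative if homogeneous elements commute
up to the Koszul sign. -/
def Supercommutative (𝒜 : ZMod 2 → Submodule k A) : Prop :=
  ∀ (i j : ZMod 2), ∀ a ∈ 𝒜 i, ∀ b ∈ 𝒜 j, a * b = sgn k i j • (b * a)

/-- A Lie superalgebra bracket on a graded module. -/
structure IsLieSuperBracket {L : Type*} [AddCommGroup L] [Module k L]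
    (ℒ : ZMod 2 → Submodule k L) (br : L →ₗ[k] L →ₗ[k] L) : Prop where
  mem : ∀ i j, ∀ a ∈ ℒ i, ∀ b ∈ ℒ j, br a b ∈ ℒ (i + j)
  antisymm : ∀ i j, ∀ a ∈ ℒ i, ∀ b ∈ ℒ j, br a b = -(sgn k i j • br b a)
  jacobi : ∀ i j l, ∀ a ∈ ℒ i, ∀ b ∈ ℒ j, ∀ c ∈ ℒ l,
      sgn k i l • br a (br b c) + sgn k i j • br b (br c a)
        + sgn k j l • br c (br a b) = 0

/-- A Poisson superalgebra bracket: a Lie superalgebra bracket satisfying the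
super Leibniz rule. -/
structure IsPoissonBracket (𝒜 : ZMod 2 → Submodule k A)
    (br : A →ₗ[k] A →ₗ[k] A) extends IsLieSuperBracket k 𝒜 br : Prop where
  leibniz : ∀ i j, ∀ a ∈ 𝒜 i, ∀ b ∈ 𝒜 j, ∀ c : A,
      br a (b * c) = sgn k i j • (b * br a c) + br a b * c

/-- `(A, 𝒜, br)` is a Poisson superalgebra. -/
structure IsPoissonSuperalgebra (𝒜 : ZMod 2 → Submodule k A)
    (br : A →ₗ[k] A →ₗ[k] A) : Prop where
  supercomm : Supercommutative k A 𝒜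
  bracket : IsPoissonBracket k A 𝒜 br

variable {B : Type*} [Ring B] [Algebra k B]

/-- Property P for a triple `(B, γ, δ)` relative to a Poisson superalgebra
`(A, 𝒜, br)`, where `B` is a superalgebra with grading `ℬ`. -/
structure PropP (𝒜 : ZMod 2 → Submodule k A) (br : A →ₗ[k] A →ₗ[k] A)
    (ℬ : ZMod 2 → Submodule k B) (γ : A →ₐ[k] B) (δ : A →ₗ[k] B) : Prop where
  γ_even : ∀ i, ∀ a ∈ 𝒜 i, γ a ∈ ℬ i
  δ_even : ∀ i, ∀ a ∈ 𝒜 i, δ a ∈ ℬ i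
  δ_lie : ∀ i j, ∀ a ∈ 𝒜 i, ∀ b ∈ 𝒜 j,
      δ (br a b) = δ a * δ b - sgn k i j • (δ b * δ a)
  bracket_eq : ∀ i j, ∀ a ∈ 𝒜 i, ∀ b ∈ 𝒜 j,
      γ (br a b) = δ a * γ b - sgn k i j • (γ b * δ a)
  δ_mul : ∀ i j, ∀ a ∈ 𝒜 i, ∀ b ∈ 𝒜 j,
      δ (a * b) = γ a * δ b + sgn k i j • (γ b * δ a)

/-- `(U, 𝒰, m, h)` is a universal enveloping algebra of the Poisson superalgebra
`(A, 𝒜, br)`: it satisfies property P and is universal among all graded triples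
satisfying property P. -/
def IsUEA (𝒜 : ZMod 2 → Submodule k A) (br : A →ₗ[k] A →ₗ[k] A)
    (U : Type*) [Ring U] [Algebra k U] (𝒰 : ZMod 2 → Submodule k U)
    (m : A →ₐ[k] U) (h : A →ₗ[k] U) : Prop :=
  PropP k A 𝒜 br 𝒰 m h ∧
  ∀ (B : Type uB) [Ring B] [Algebra k B] (ℬ : ZMod 2 → Submodule k B),
    GradedAlgebra ℬ → ∀ (γ : A →ₐ[k] B) (δ : A →ₗ[k] B),
    PropP k A 𝒜 br ℬ γ δ →
    ∃! φ : U →ₐ[k] B, φ.comp m = γ ∧ φ.toLinearMap ∘ₗ h = δ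

end Core
section TG

variable {k : Type*} [CommRing k] {A : Type*} [Ring A] [Algebra k A] {B : Type*} [Ring B] [Algebra k B]

/-- Tensor grading. -/
noncomputable def tensorGrading (𝒜 : ZMod 2 → Submodule k A) (ℬ : ZMod 2 → Submodule k B)
    (p : ZMod 2) : Submodule k (A ⊗[k] B) :=
  ⨆ i : ZMod 2, LinearMap.range (TensorProduct.map (𝒜 i).subtype (ℬ (p - i)).subtype)

end TG

/-! On pure tensors of homogeneous elements both sides are expanded with property P of
`(U, m, h)`: `m` and `h` turn brackets and products of `R` into supercommutators and the
Leibniz-type expression `m a * h b ± m b * h a`, `m` preserves supercommutativity, and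
antisymmetry of the bracket provides a rule for moving `h b` past `m a`. After these
substitutions the identity in `U ⊗̂ U` is a sign check, done parity by parity. Both sides are
bilinear and the homogeneous components of `R ⊗̂ R` are spanned by homogeneous pure tensors,
which gives the general case. -/

open TensorProduct

section Sign

lemma zmod_two_eq_zero_or_one : ∀ i : ZMod 2, i = 0 ∨ i = 1 := by decide

variable (k : Type*) [CommRing k]

@[simp] lemma sgn_zero_left (j : ZMod 2) : sgn k 0 j = 1 := by
  simp [sgn]

@[simp] lemma sgn_zero_right (i : ZMod 2) : sgn k i 0 = 1 := by
  simp [sgn]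

@[simp] lemma sgn_one_one : sgn k 1 1 = -1 := by
  simp [sgn, ZMod.val_one]

lemma sgn_comm (i j : ZMod 2) : sgn k i j = sgn k j i := by
  simp [sgn, Nat.mul_comm]

lemma sgn_mul_self (i j : ZMod 2) : sgn k i j * sgn k i j = 1 := by
  rw [sgn, ← pow_add, ← two_mul, pow_mul, neg_one_sq, one_pow]

end Sign

section Relations

variable {k : Type*} [CommRing k] {A : Type*} [Ring A] [Algebra k A]
  {B : Type*} [Ring B] [Algebra k B] {𝒜 : ZMod 2 → Submodule k A}

lemma Supercommutative.map_mul_comm (hsc : Supercommutative k A 𝒜) (γ : A →ₐ[k] B)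
    {i j : ZMod 2} {a b : A} (ha : a ∈ 𝒜 i) (hb : b ∈ 𝒜 j) :
    γ b * γ a = sgn k i j • (γ a * γ b) := by
  rw [← map_mul, hsc j i b hb a ha, map_smul, map_mul, sgn_comm]

variable {br : A →ₗ[k] A →ₗ[k] A} {ℬ : ZMod 2 → Submodule k B} {γ : A →ₐ[k] B}
  {δ : A →ₗ[k] B}

/-- Comparing `PropP.bracket_eq` for `{a, b}` and for `{b, a}` through antisymmetry lets one
move `δ b` past `γ a`. -/
lemma PropP.δ_mul_γ (hP : PropP k A 𝒜 br ℬ γ δ)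
    (hanti : ∀ i j, ∀ a ∈ 𝒜 i, ∀ b ∈ 𝒜 j, br a b = -(sgn k i j • br b a))
    {i j : ZMod 2} {a b : A} (ha : a ∈ 𝒜 i) (hb : b ∈ 𝒜 j) :
    δ b * γ a = sgn k i j • (γ a * δ b) - sgn k i j • (δ a * γ b) + γ b * δ a := by
  have hab := hP.bracket_eq i j a ha b hb
  have hba : γ (br a b) = γ a * δ b - sgn k i j • (δ b * γ a) := by
    rw [hanti i j a ha b hb, map_neg, map_smul, hP.bracket_eq j i b hb a ha, sgn_comm k j i,
      smul_sub, smul_smul, sgn_mul_self, one_smul, neg_sub]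
  have hswap : sgn k i j • (δ b * γ a) = γ a * δ b - (δ a * γ b - sgn k i j • (γ b * δ a)) := by
    rw [← hab, hba, sub_sub_cancel]
  calc δ b * γ a = sgn k i j • (sgn k i j • (δ b * γ a)) := by
        rw [smul_smul, sgn_mul_self, one_smul]
    _ = _ := by rw [hswap, smul_sub, smul_sub, smul_smul, sgn_mul_self, one_smul]; abel

end Relations

section TensorGrading

variable {k : Type*} [CommRing k] {A : Type*} [Ring A] [Algebra k A]
  {B : Type*} [Ring B] [Algebra k B] {P : Type*} [AddCommGroup P] [Module k P]
  {𝒜 : ZMod 2 → Submodule k A} {ℬ : ZMod 2 → Submodule k B}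

lemma tmul_mem_tensorGrading {p q : ZMod 2} {a : A} {b : B} (ha : a ∈ 𝒜 q)
    (hb : b ∈ ℬ (p - q)) : a ⊗ₜ[k] b ∈ tensorGrading 𝒜 ℬ p :=
  Submodule.mem_iSup_of_mem q ⟨(⟨a, ha⟩ : 𝒜 q) ⊗ₜ[k] (⟨b, hb⟩ : ℬ (p - q)), rfl⟩

lemma tensorGrading_le_comap {p : ZMod 2} {S : Submodule k P} {f : A ⊗[k] B →ₗ[k] P}
    (hf : ∀ q, ∀ a ∈ 𝒜 q, ∀ b ∈ ℬ (p - q), f (a ⊗ₜ[k] b) ∈ S) :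
    tensorGrading 𝒜 ℬ p ≤ S.comap f := by
  refine iSup_le fun q => ?_
  rintro _ ⟨x, rfl⟩
  induction x using TensorProduct.induction_on with
  | zero => simp
  | tmul a b => exact hf q a a.2 b b.2
  | add x y hx hy => rw [map_add]; exact add_mem hx hy

lemma eq_of_mem_tensorGrading {p : ZMod 2} {f g : A ⊗[k] B →ₗ[k] P}
    (hfg : ∀ q, ∀ a ∈ 𝒜 q, ∀ b ∈ ℬ (p - q), f (a ⊗ₜ b) = g (a ⊗ₜ b))
    {t : A ⊗[k] B} (ht : t ∈ tensorGrading 𝒜 ℬ p) : f t = g t := by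
  simpa [sub_eq_zero] using tensorGrading_le_comap (S := ⊥) (f := f - g)
    (fun q a ha b hb => by simp [hfg q a ha b hb]) ht

lemma eq_of_mem_tensorGrading₂ {i j : ZMod 2} {F G : A ⊗[k] B →ₗ[k] A ⊗[k] B →ₗ[k] P}
    (hFG : ∀ q q', ∀ a ∈ 𝒜 q, ∀ a' ∈ ℬ (i - q), ∀ b ∈ 𝒜 q', ∀ b' ∈ ℬ (j - q'),
      F (a ⊗ₜ a') (b ⊗ₜ b') = G (a ⊗ₜ a') (b ⊗ₜ b'))
    {t s : A ⊗[k] B} (ht : t ∈ tensorGrading 𝒜 ℬ i) (hs : s ∈ tensorGrading 𝒜 ℬ j) :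
    F t s = G t s :=
  eq_of_mem_tensorGrading (f := F.flip s) (g := G.flip s)
    (fun q a ha a' ha' => eq_of_mem_tensorGrading (hFG q · a ha a' ha') hs) ht

end TensorGrading

section SymmTensorMap

variable {k : Type*} [CommRing k] {A : Type*} [Ring A] [Algebra k A]
  {B : Type*} [Ring B] [Algebra k B]

noncomputable def symmTensorMap (γ : A →ₐ[k] B) (δ : A →ₗ[k] B) : A ⊗[k] A →ₗ[k] B ⊗[k] B :=
  TensorProduct.map γ.toLinearMap δ + TensorProduct.map δ γ.toLinearMap

@[simp] lemma symmTensorMap_tmul (γ : A →ₐ[k] B) (δ : A →ₗ[k] B) (a a' : A) :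
    symmTensorMap γ δ (a ⊗ₜ a') = γ a ⊗ₜ δ a' + δ a ⊗ₜ γ a' := by
  simp [symmTensorMap]

variable {𝒜 : ZMod 2 → Submodule k A} {br : A →ₗ[k] A →ₗ[k] A} {ℬ : ZMod 2 → Submodule k B}
  {γ : A →ₐ[k] B} {δ : A →ₗ[k] B}

lemma PropP.symmTensorMap_mem_tensorGrading (hP : PropP k A 𝒜 br ℬ γ δ) {p : ZMod 2}
    {t : A ⊗[k] A} (ht : t ∈ tensorGrading 𝒜 𝒜 p) :
    symmTensorMap γ δ t ∈ tensorGrading ℬ ℬ p := by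
  refine tensorGrading_le_comap (S := tensorGrading ℬ ℬ p) (f := symmTensorMap γ δ)
    (fun q a ha a' ha' => ?_) ht
  rw [symmTensorMap_tmul]
  exact add_mem (tmul_mem_tensorGrading (hP.γ_even q a ha) (hP.δ_even _ a' ha'))
    (tmul_mem_tensorGrading (hP.δ_even q a ha) (hP.γ_even _ a' ha'))

lemma PropP.symmTensorMap_bracket_tmul (hP : PropP k A 𝒜 br ℬ γ δ)
    (hsc : Supercommutative k A 𝒜)
    (hanti : ∀ i j, ∀ a ∈ 𝒜 i, ∀ b ∈ 𝒜 j, br a b = -(sgn k i j • br b a))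
    {brT : A ⊗[k] A →ₗ[k] A ⊗[k] A →ₗ[k] A ⊗[k] A}
    (hbrT : ∀ (pa' pb : ZMod 2), ∀ a' ∈ 𝒜 pa', ∀ b ∈ 𝒜 pb, ∀ (a b' : A),
      brT (a ⊗ₜ[k] a') (b ⊗ₜ[k] b')
        = sgn k pa' pb • (br a b ⊗ₜ[k] (a' * b') + (a * b) ⊗ₜ[k] br a' b'))
    {mulB : B ⊗[k] B →ₗ[k] B ⊗[k] B →ₗ[k] B ⊗[k] B}
    (hmulB : ∀ (pv pu' : ZMod 2), ∀ v ∈ ℬ pv, ∀ u' ∈ ℬ pu', ∀ (u v' : B),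
      mulB (u ⊗ₜ[k] v) (u' ⊗ₜ[k] v') = sgn k pv pu' • ((u * u') ⊗ₜ[k] (v * v')))
    {α α' β β' : ZMod 2} {a a' b b' : A}
    (ha : a ∈ 𝒜 α) (ha' : a' ∈ 𝒜 α') (hb : b ∈ 𝒜 β) (hb' : b' ∈ 𝒜 β') :
    symmTensorMap γ δ (brT (a ⊗ₜ a') (b ⊗ₜ b'))
      = mulB (symmTensorMap γ δ (a ⊗ₜ a')) (symmTensorMap γ δ (b ⊗ₜ b'))
        - sgn k (α + α') (β + β') •
          mulB (symmTensorMap γ δ (b ⊗ₜ b')) (symmTensorMap γ δ (a ⊗ₜ a')) := by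
  rw [hbrT α' β a' ha' b hb a b', map_smul, map_add]
  simp only [symmTensorMap_tmul, map_mul, hP.δ_mul _ _ a ha b hb, hP.δ_mul _ _ a' ha' b' hb',
    hP.bracket_eq _ _ a ha b hb, hP.bracket_eq _ _ a' ha' b' hb', hP.δ_lie _ _ a ha b hb,
    hP.δ_lie _ _ a' ha' b' hb', map_add, LinearMap.add_apply,
    hmulB _ _ _ (hP.γ_even _ _ ha') _ (hP.γ_even _ _ hb),
    hmulB _ _ _ (hP.γ_even _ _ ha') _ (hP.δ_even _ _ hb),
    hmulB _ _ _ (hP.δ_even _ _ ha') _ (hP.γ_even _ _ hb),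
    hmulB _ _ _ (hP.δ_even _ _ ha') _ (hP.δ_even _ _ hb),
    hmulB _ _ _ (hP.γ_even _ _ hb') _ (hP.γ_even _ _ ha),
    hmulB _ _ _ (hP.γ_even _ _ hb') _ (hP.δ_even _ _ ha),
    hmulB _ _ _ (hP.δ_even _ _ hb') _ (hP.γ_even _ _ ha),
    hmulB _ _ _ (hP.δ_even _ _ hb') _ (hP.δ_even _ _ ha)]
  rw [hsc.map_mul_comm γ ha hb, hsc.map_mul_comm γ ha' hb', hP.δ_mul_γ hanti ha hb,
    hP.δ_mul_γ hanti ha' hb']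
  rcases zmod_two_eq_zero_or_one α with rfl | rfl <;>
    rcases zmod_two_eq_zero_or_one α' with rfl | rfl <;>
    rcases zmod_two_eq_zero_or_one β with rfl | rfl <;>
    rcases zmod_two_eq_zero_or_one β' with rfl | rfl <;>
    simp only [zero_add, add_zero, show (1 + 1 : ZMod 2) = 0 from rfl, sgn_zero_left,
      sgn_zero_right, sgn_one_one, smul_add, smul_sub, tmul_add, add_tmul, tmul_sub, sub_tmul,
      tmul_neg, neg_tmul, one_smul, neg_smul, smul_neg, neg_neg] <;>
    module

end SymmTensorMap

section Stmt13

variable {k : Type*} [Field k] [CharZero k]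
  {A : Type*} [Ring A] [Algebra k A]
  {U : Type*} [Ring U] [Algebra k U]

theorem tensor_map_lie_hom_general
    (𝒜 : ZMod 2 → Submodule k A)
    (br : A →ₗ[k] A →ₗ[k] A) (hP : IsPoissonSuperalgebra k A 𝒜 br)
    (𝒰 : ZMod 2 → Submodule k U)
    (m : A →ₐ[k] U) (h : A →ₗ[k] U)
    (hU : IsUEA k A 𝒜 br U 𝒰 m h)
    -- the Poisson bracket of `R ⊗̂ R`:
    (brT : (A ⊗[k] A) →ₗ[k] (A ⊗[k] A) →ₗ[k] (A ⊗[k] A))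
    (hbrT : ∀ (pa' pb : ZMod 2), ∀ a' ∈ 𝒜 pa', ∀ b ∈ 𝒜 pb, ∀ (a b' : A),
      brT (a ⊗ₜ[k] a') (b ⊗ₜ[k] b')
        = sgn k pa' pb • (br a b ⊗ₜ[k] (a' * b') + (a * b) ⊗ₜ[k] br a' b'))
    -- the multiplication of the super tensor product `U(R) ⊗̂ U(R)`:
    (mulU : (U ⊗[k] U) →ₗ[k] (U ⊗[k] U) →ₗ[k] (U ⊗[k] U))
    (hmulU : ∀ (pv pu' : ZMod 2), ∀ v ∈ 𝒰 pv, ∀ u' ∈ 𝒰 pu', ∀ (u v' : U),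
      mulU (u ⊗ₜ[k] v) (u' ⊗ₜ[k] v') = sgn k pv pu' • ((u * u') ⊗ₜ[k] (v * v'))) :
    (∀ p, ∀ t ∈ tensorGrading 𝒜 𝒜 p,
      (TensorProduct.map m.toLinearMap h + TensorProduct.map h m.toLinearMap) t
        ∈ tensorGrading 𝒰 𝒰 p) ∧
    (∀ (i j : ZMod 2), ∀ t ∈ tensorGrading 𝒜 𝒜 i, ∀ s ∈ tensorGrading 𝒜 𝒜 j,
      (TensorProduct.map m.toLinearMap h + TensorProduct.map h m.toLinearMap) (brT t s)
        = mulU ((TensorProduct.map m.toLinearMap h + TensorProduct.map h m.toLinearMap) t)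
            ((TensorProduct.map m.toLinearMap h + TensorProduct.map h m.toLinearMap) s)
          - sgn k i j •
            mulU ((TensorProduct.map m.toLinearMap h + TensorProduct.map h m.toLinearMap) s)
              ((TensorProduct.map m.toLinearMap h + TensorProduct.map h m.toLinearMap) t)) := by
  obtain ⟨hmh, -⟩ := hU
  refine ⟨fun p t ht => hmh.symmTensorMap_mem_tensorGrading ht, fun i j t ht s hs => ?_⟩
  let Φ := symmTensorMap m h
  refine eq_of_mem_tensorGrading₂ (F := brT.compr₂ Φ)
    (G := mulU.compl₁₂ Φ Φ - sgn k i j • (mulU.compl₁₂ Φ Φ).flip) ?_ ht hs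
  intro q q' a ha a' ha' b hb b' hb'
  have hpure := hmh.symmTensorMap_bracket_tmul hP.supercomm hP.bracket.antisymm hbrT hmulU
    ha ha' hb hb'
  rwa [add_sub_cancel, add_sub_cancel] at hpure

/-- For the universal enveloping algebra `(U(R), m, h)` of a Poisson
superalgebra `R`, the map `m ⊗̂ h + h ⊗̂ m : R ⊗̂ R → U(R) ⊗̂ U(R)` is an even
Lie superalgebra homomorphism, where `R ⊗̂ R` carries the tensor Poisson bracket
and `U(R) ⊗̂ U(R)` the supercommutator bracket of the super tensor product. -/
theorem tensor_map_lie_hom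
    (𝒜 : ZMod 2 → Submodule k A) [GradedAlgebra 𝒜]
    (br : A →ₗ[k] A →ₗ[k] A) (hP : IsPoissonSuperalgebra k A 𝒜 br)
    (𝒰 : ZMod 2 → Submodule k U) [GradedAlgebra 𝒰]
    (m : A →ₐ[k] U) (h : A →ₗ[k] U)
    (hU : IsUEA k A 𝒜 br U 𝒰 m h)
    -- the Poisson bracket of `R ⊗̂ R`:
    (brT : (A ⊗[k] A) →ₗ[k] (A ⊗[k] A) →ₗ[k] (A ⊗[k] A))
    (hbrT : ∀ (pa' pb : ZMod 2), ∀ a' ∈ 𝒜 pa', ∀ b ∈ 𝒜 pb, ∀ (a b' : A),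
      brT (a ⊗ₜ[k] a') (b ⊗ₜ[k] b')
        = sgn k pa' pb • (br a b ⊗ₜ[k] (a' * b') + (a * b) ⊗ₜ[k] br a' b'))
    -- the multiplication of the super tensor product `U(R) ⊗̂ U(R)`:
    (mulU : (U ⊗[k] U) →ₗ[k] (U ⊗[k] U) →ₗ[k] (U ⊗[k] U))
    (hmulU : ∀ (pv pu' : ZMod 2), ∀ v ∈ 𝒰 pv, ∀ u' ∈ 𝒰 pu', ∀ (u v' : U),
      mulU (u ⊗ₜ[k] v) (u' ⊗ₜ[k] v') = sgn k pv pu' • ((u * u') ⊗ₜ[k] (v * v'))) :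
    (∀ p, ∀ t ∈ tensorGrading 𝒜 𝒜 p,
      (TensorProduct.map m.toLinearMap h + TensorProduct.map h m.toLinearMap) t
        ∈ tensorGrading 𝒰 𝒰 p) ∧
    (∀ (i j : ZMod 2), ∀ t ∈ tensorGrading 𝒜 𝒜 i, ∀ s ∈ tensorGrading 𝒜 𝒜 j,
      (TensorProduct.map m.toLinearMap h + TensorProduct.map h m.toLinearMap) (brT t s)
        = mulU ((TensorProduct.map m.toLinearMap h + TensorProduct.map h m.toLinearMap) t)
            ((TensorProduct.map m.toLinearMap h + TensorProduct.map h m.toLinearMap) s)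
          - sgn k i j •
            mulU ((TensorProduct.map m.toLinearMap h + TensorProduct.map h m.toLinearMap) s)
              ((TensorProduct.map m.toLinearMap h + TensorProduct.map h m.toLinearMap) t)) :=
  tensor_map_lie_hom_general 𝒜 br hP 𝒰 m h hU brT hbrT mulU hmulU

end Stmt13

end PaperSuper
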